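/- arXiv:2604.13999 — 3 statements merged into one kernel-verified Lean document; each statement's English description precedes it below -/
import Mathlib

section
/- Let η be a Fox pairing on ℤ[π], let f : π → G be a group homomorphism, and let κ : ℤ[π] → ℤ[G] be the induced ring homomorphism of group rings. If α, β ∈ π satisfy f(α) = 1 and f(β) = 1, then for all x, y ∈ π one has κ(η(xαx⁻¹, yβy⁻¹)) = κ(x)·κ(η(α, β))·κ(y)⁻¹ in ℤ[G] (where κ(y)⁻¹ denotes the image of y⁻¹). -/
/-- The augmentation homomorphism of the group ring `ℤ[π]`. -/
noncomputable def aug (π : Type*) [Group π] : MonoidAlgebra ℤ π →ₐ[ℤ] ℤ :=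
  MonoidAlgebra.lift ℤ ℤ π 1

/-- A Fox pairing on the group ring `ℤ[π]`. -/
structure FoxPairing (π : Type*) [Group π] where
  toFun : MonoidAlgebra ℤ π →ₗ[ℤ] MonoidAlgebra ℤ π →ₗ[ℤ] MonoidAlgebra ℤ π
  fox_left : ∀ x x' y : MonoidAlgebra ℤ π,
    toFun (x * x') y = x * toFun x' y + aug π x' • toFun x y
  fox_right : ∀ x y y' : MonoidAlgebra ℤ π,
    toFun x (y * y') = toFun x y * y' + aug π y • toFun x y'

/-!
Expanding by the Fox rules, with `η(g⁻¹, w) = -g⁻¹ η(g, w)` and `η(v, g⁻¹) = -η(v, g) g⁻¹`,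
gives the conjugation formulas
`η(ghg⁻¹, w) = g η(h, w) + (1 - ghg⁻¹) η(g, w)` and `η(v, ghg⁻¹) = η(v, h) g⁻¹ + η(v, g) (h - 1) g⁻¹`.
When `f h = 1` the correction terms contain the factors `1 - ghg⁻¹` and `h - 1`, which `κ` kills.
-/

open MonoidAlgebra

lemma aug_of {π : Type*} [Group π] (g : π) : aug π (of ℤ π g) = 1 := by
  simp [aug]

namespace FoxPairing

variable {π : Type*} [Group π] (η : FoxPairing π)

lemma one_left (w : MonoidAlgebra ℤ π) : η.toFun 1 w = 0 := by
  simpa using η.fox_left 1 1 w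

lemma one_right (v : MonoidAlgebra ℤ π) : η.toFun v 1 = 0 := by
  simpa using η.fox_right v 1 1

lemma of_mul_left (g h : π) (w : MonoidAlgebra ℤ π) :
    η.toFun (of ℤ π (g * h)) w = of ℤ π g * η.toFun (of ℤ π h) w + η.toFun (of ℤ π g) w := by
  rw [map_mul, η.fox_left, aug_of, one_smul]

lemma of_mul_right (v : MonoidAlgebra ℤ π) (g h : π) :
    η.toFun v (of ℤ π (g * h)) = η.toFun v (of ℤ π g) * of ℤ π h + η.toFun v (of ℤ π h) := by
  rw [map_mul, η.fox_right, aug_of, one_smul]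

lemma of_inv_left (g : π) (w : MonoidAlgebra ℤ π) :
    η.toFun (of ℤ π g⁻¹) w = -(of ℤ π g⁻¹ * η.toFun (of ℤ π g) w) := by
  have h := η.of_mul_left g⁻¹ g w
  rw [inv_mul_cancel, map_one, one_left] at h
  exact eq_neg_of_add_eq_zero_right h.symm

lemma of_inv_right (v : MonoidAlgebra ℤ π) (g : π) :
    η.toFun v (of ℤ π g⁻¹) = -(η.toFun v (of ℤ π g) * of ℤ π g⁻¹) := by
  have h := η.of_mul_right v g g⁻¹
  rw [mul_inv_cancel, map_one, one_right] at h
  exact eq_neg_of_add_eq_zero_right h.symm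

lemma conj_left (g h : π) (w : MonoidAlgebra ℤ π) :
    η.toFun (of ℤ π (g * h * g⁻¹)) w =
      of ℤ π g * η.toFun (of ℤ π h) w + (1 - of ℤ π (g * h * g⁻¹)) * η.toFun (of ℤ π g) w := by
  rw [η.of_mul_left, η.of_mul_left, η.of_inv_left, map_mul (of ℤ π) (g * h) g⁻¹]
  noncomm_ring

lemma conj_right (v : MonoidAlgebra ℤ π) (g h : π) :
    η.toFun v (of ℤ π (g * h * g⁻¹)) =
      η.toFun v (of ℤ π h) * of ℤ π g⁻¹ + η.toFun v (of ℤ π g) * (of ℤ π h - 1) * of ℤ π g⁻¹ := by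
  rw [mul_assoc, η.of_mul_right, η.of_mul_right, η.of_inv_right, map_mul (of ℤ π) h g⁻¹]
  noncomm_ring

end FoxPairing

/-- If `f(α) = 1` and `f(β) = 1`, then for all `x, y ∈ π`,
`κ(η(xαx⁻¹, yβy⁻¹)) = κ(x)·κ(η(α, β))·κ(y⁻¹)` where `κ : ℤ[π] → ℤ[G]` is the
ring homomorphism induced by `f : π → G`. -/
theorem foxPairing_conj_ker (π : Type*) [Group π] (G : Type*) [Group G]
    (η : FoxPairing π) (f : π →* G) (α β : π) (hα : f α = 1) (hβ : f β = 1)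
    (x y : π) :
    MonoidAlgebra.mapDomainRingHom ℤ f
        (η.toFun (MonoidAlgebra.of ℤ π (x * α * x⁻¹)) (MonoidAlgebra.of ℤ π (y * β * y⁻¹))) =
      MonoidAlgebra.mapDomainRingHom ℤ f (MonoidAlgebra.of ℤ π x) *
        MonoidAlgebra.mapDomainRingHom ℤ f
          (η.toFun (MonoidAlgebra.of ℤ π α) (MonoidAlgebra.of ℤ π β)) *
        MonoidAlgebra.mapDomainRingHom ℤ f (MonoidAlgebra.of ℤ π y⁻¹) := by
  set κ := mapDomainRingHom ℤ f
  have hκ {g : π} (hg : f g = 1) : κ (of ℤ π g) = 1 := by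
    simp [κ, hg, one_def]
  have hκ_conj (g : π) {h : π} (hh : f h = 1) : κ (of ℤ π (g * h * g⁻¹)) = 1 :=
    hκ (by simp [hh])
  rw [η.conj_left, η.conj_right, map_add, map_mul, map_mul, map_sub, map_one, hκ_conj x hα,
    sub_self, zero_mul, add_zero, map_add, map_mul, map_mul, map_mul, map_sub, map_one, hκ hβ,
    sub_self, mul_zero, zero_mul, add_zero, mul_assoc]
end

section
/- Let η be a Fox pairing on ℤ[π] and let I be the augmentation ideal of ℤ[π]. Then for all integers k, l ≥ 1 with k + l ≥ 3, one has η(Iᵏ, Iˡ) ⊆ I^{k+l−2}; that is, for every a ∈ Iᵏ and b ∈ Iˡ, η(a, b) ∈ I^{k+l−2}. -/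
/-- The augmentation ideal `I = ker ε`, as a `ℤ`-submodule of `ℤ[π]`. -/
noncomputable def augIdeal (π : Type*) [Group π] : Submodule ℤ (MonoidAlgebra ℤ π) :=
  LinearMap.ker (aug π).toLinearMap

namespace Submodule

variable {R A : Type*} [CommSemiring R] [Semiring A] [Algebra R A] {I : Submodule R A}

theorem pow_succ_mul_top_le (h : I * ⊤ ≤ I) (n : ℕ) : I ^ (n + 1) * ⊤ ≤ I ^ (n + 1) := by
  rw [pow_succ, mul_assoc]
  exact mul_le_mul' le_rfl h

theorem top_mul_pow_succ_le (h : ⊤ * I ≤ I) (n : ℕ) : ⊤ * I ^ (n + 1) ≤ I ^ (n + 1) := by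
  rw [pow_succ', ← mul_assoc]
  exact mul_le_mul' h le_rfl

end Submodule

section AugmentationIdeal

variable {π : Type*} [Group π]

theorem aug_eq_zero_of_mem_augIdeal {x : MonoidAlgebra ℤ π} (hx : x ∈ augIdeal π) :
    aug π x = 0 :=
  LinearMap.mem_ker.mp hx

theorem augIdeal_mul_top_le : augIdeal π * ⊤ ≤ augIdeal π :=
  Submodule.mul_le.mpr fun x hx r _ ↦ LinearMap.mem_ker.mpr <| by
    simp [aug_eq_zero_of_mem_augIdeal hx]

theorem top_mul_augIdeal_le : ⊤ * augIdeal π ≤ augIdeal π :=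
  Submodule.mul_le.mpr fun r _ x hx ↦ LinearMap.mem_ker.mpr <| by
    simp [aug_eq_zero_of_mem_augIdeal hx]

theorem augIdeal_pow_mul_top_mul_pow_le {k l : ℕ} (hkl : k + l ≠ 0) :
    augIdeal π ^ k * (⊤ * augIdeal π ^ l) ≤ augIdeal π ^ (k + l) := by
  rcases k with _ | k
  · obtain ⟨l, rfl⟩ := Nat.exists_eq_succ_of_ne_zero (by simpa using hkl)
    simpa using Submodule.top_mul_pow_succ_le top_mul_augIdeal_le l
  · rw [← mul_assoc, pow_add _ (k + 1) l]
    exact mul_le_mul' (Submodule.pow_succ_mul_top_le augIdeal_mul_top_le k) le_rfl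

end AugmentationIdeal

namespace FoxPairing

variable {π : Type*} [Group π] (η : FoxPairing π)

theorem toFun_mem_top_mul_pow (x : MonoidAlgebra ℤ π) {b : MonoidAlgebra ℤ π} {l : ℕ}
    (hb : b ∈ augIdeal π ^ (l + 1)) : η.toFun x b ∈ ⊤ * augIdeal π ^ l := by
  rw [pow_succ'] at hb
  refine Submodule.mul_induction_on hb (fun p hp q hq ↦ ?_) fun u v hu hv ↦ ?_
  · rw [η.fox_right, aug_eq_zero_of_mem_augIdeal hp, zero_smul, add_zero]
    exact Submodule.mul_mem_mul Submodule.mem_top hq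
  · rw [map_add]
    exact add_mem hu hv

theorem toFun_mem_pow_mul {S : Submodule ℤ (MonoidAlgebra ℤ π)} {y : MonoidAlgebra ℤ π}
    (hS : ∀ q ∈ augIdeal π, η.toFun q y ∈ S) {a : MonoidAlgebra ℤ π} {k : ℕ}
    (ha : a ∈ augIdeal π ^ (k + 1)) : η.toFun a y ∈ augIdeal π ^ k * S := by
  rw [pow_succ] at ha
  refine Submodule.mul_induction_on ha (fun p hp q hq ↦ ?_) fun u v hu hv ↦ ?_
  · rw [η.fox_left, aug_eq_zero_of_mem_augIdeal hq, zero_smul, add_zero]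
    exact Submodule.mul_mem_mul hp (hS q hq)
  · rw [map_add, LinearMap.add_apply]
    exact add_mem hu hv

end FoxPairing

/-- For `k, l ≥ 1` with `k + l ≥ 3`, a Fox pairing satisfies `η(Iᵏ, Iˡ) ⊆ I^(k+l-2)`. -/
theorem foxPairing_augIdeal_pow (π : Type*) [Group π] (η : FoxPairing π)
    (k l : ℕ) (hk : 1 ≤ k) (hl : 1 ≤ l) (hkl : 3 ≤ k + l)
    (a b : MonoidAlgebra ℤ π) (ha : a ∈ augIdeal π ^ k) (hb : b ∈ augIdeal π ^ l) :
    η.toFun a b ∈ augIdeal π ^ (k + l - 2) := by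
  obtain ⟨k, rfl⟩ := Nat.exists_eq_add_of_le' hk
  obtain ⟨l, rfl⟩ := Nat.exists_eq_add_of_le' hl
  rw [show k + 1 + (l + 1) - 2 = k + l by omega]
  exact augIdeal_pow_mul_top_mul_pow_le (by omega)
    (η.toFun_mem_pow_mul (fun q _ ↦ η.toFun_mem_top_mul_pow q hb) ha)
end

section
/- Let η be a Fox pairing on ℤ[π] and let I be the augmentation ideal of ℤ[π]. If a, b ∈ ℤ[π] satisfy a − ε(a)·1 ∈ I² and b − ε(b)·1 ∈ I², then η(a, b) ∈ I² (in particular ε(η(a, b)) = 0). -/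
/-! Since `η` vanishes as soon as one argument is `1`, we have
`η(a, b) = η(a - ε(a), b - ε(b))`, so it suffices to show `η(I², I²) ⊆ I²`.
For `p, q ∈ I` the Fox rules collapse to `η(x, pq) = η(x, p) q` and `η(pq, y) = p η(q, y)`.
The first shows `ε(η(x, y)) = 0` for `y ∈ I²`, i.e. `η(q, y) ∈ I`, and then the second puts
`η(pq, y)` in `I · I`. -/

section

variable {π : Type*} [Group π]

theorem mem_augIdeal_iff {x : MonoidAlgebra ℤ π} : x ∈ augIdeal π ↔ aug π x = 0 := Iff.rfl

theorem augIdeal_sq_le_self : augIdeal π ^ 2 ≤ augIdeal π := by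
  rw [sq, Submodule.mul_le]
  intro p hp q _
  rw [mem_augIdeal_iff, map_mul, mem_augIdeal_iff.mp hp, zero_mul]

namespace FoxPairing

variable (η : FoxPairing π)

theorem apply_one_left (y : MonoidAlgebra ℤ π) : η.toFun 1 y = 0 := by
  simpa using η.fox_left 1 1 y

theorem apply_one_right (x : MonoidAlgebra ℤ π) : η.toFun x 1 = 0 := by
  simpa using η.fox_right x 1 1

theorem apply_sub_aug_smul_one (a b : MonoidAlgebra ℤ π) :
    η.toFun (a - aug π a • 1) (b - aug π b • 1) = η.toFun a b := by
  simp only [map_sub, map_smul, LinearMap.sub_apply, LinearMap.smul_apply, apply_one_left,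
    apply_one_right, smul_zero, sub_zero]

theorem apply_mul_right_of_mem_augIdeal (x : MonoidAlgebra ℤ π) {p : MonoidAlgebra ℤ π}
    (hp : p ∈ augIdeal π) (q : MonoidAlgebra ℤ π) :
    η.toFun x (p * q) = η.toFun x p * q := by
  rw [η.fox_right, mem_augIdeal_iff.mp hp, zero_smul, add_zero]

theorem apply_mul_left_of_mem_augIdeal (p : MonoidAlgebra ℤ π) {q : MonoidAlgebra ℤ π}
    (hq : q ∈ augIdeal π) (y : MonoidAlgebra ℤ π) :
    η.toFun (p * q) y = p * η.toFun q y := by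
  rw [η.fox_left, mem_augIdeal_iff.mp hq, zero_smul, add_zero]

theorem apply_mem_augIdeal_of_mem_sq (x : MonoidAlgebra ℤ π) {y : MonoidAlgebra ℤ π}
    (hy : y ∈ augIdeal π ^ 2) : η.toFun x y ∈ augIdeal π := by
  rw [sq] at hy
  induction hy using Submodule.mul_induction_on' with
  | mem_mul_mem p hp q hq =>
    rw [mem_augIdeal_iff, η.apply_mul_right_of_mem_augIdeal x hp, map_mul,
      mem_augIdeal_iff.mp hq, mul_zero]
  | add _ _ _ _ h₁ h₂ =>
    rw [map_add]
    exact add_mem h₁ h₂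

theorem apply_mem_sq_of_mem_sq {x y : MonoidAlgebra ℤ π} (hx : x ∈ augIdeal π ^ 2)
    (hy : y ∈ augIdeal π ^ 2) : η.toFun x y ∈ augIdeal π ^ 2 := by
  rw [sq] at hx ⊢
  induction hx using Submodule.mul_induction_on' with
  | mem_mul_mem p hp q hq =>
    rw [η.apply_mul_left_of_mem_augIdeal p hq]
    exact Submodule.mul_mem_mul hp (η.apply_mem_augIdeal_of_mem_sq q hy)
  | add _ _ _ _ h₁ h₂ =>
    rw [map_add, LinearMap.add_apply]
    exact add_mem h₁ h₂

end FoxPairing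

end

/-- If `a - ε(a)·1 ∈ I²` and `b - ε(b)·1 ∈ I²`, then `η(a, b) ∈ I²`
(in particular `ε(η(a, b)) = 0`). -/
theorem foxPairing_sq_sq (π : Type*) [Group π] (η : FoxPairing π)
    (a b : MonoidAlgebra ℤ π)
    (ha : a - aug π a • (1 : MonoidAlgebra ℤ π) ∈ augIdeal π ^ 2)
    (hb : b - aug π b • (1 : MonoidAlgebra ℤ π) ∈ augIdeal π ^ 2) :
    η.toFun a b ∈ augIdeal π ^ 2 ∧ aug π (η.toFun a b) = 0 := by
  have hmem : η.toFun a b ∈ augIdeal π ^ 2 := by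
    rw [← η.apply_sub_aug_smul_one]
    exact η.apply_mem_sq_of_mem_sq ha hb
  exact ⟨hmem, mem_augIdeal_iff.mp (augIdeal_sq_le_self hmem)⟩
end
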